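/- arXiv:1812.02330 — 4 statements merged into one kernel-verified Lean document; each statement's English description precedes it below -/
import Mathlib

section
/- The subgroup of SL₂(ℤ) consisting of matrices [[a,b],[c,d]] with a ≡ d ≡ 1 (mod 4) and b ≡ c ≡ 0 (mod 2) has index 12 in SL₂(ℤ). -/
/-!
Reduction modulo 4 maps `SL(2, ℤ)` onto `SL(2, ZMod 4)`, a group of order 48, and the subgroup of
the statement is the preimage of the subgroup `{!![1, 2x; 2y, 1]}` of order 4; hence its index is
48 / 4 = 12.

Surjectivity of reduction modulo `N`: lift the bottom row to a coprime pair of integers (moving `d`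
by a multiple of `N` so that it avoids the prime factors of `c`), complete it to a matrix of
`SL(2, ℤ)`, and correct the top row by a shear.
-/

open Matrix MatrixGroups

theorem Nat.exists_coprime_add_mul {c d N : ℕ} (hc : c ≠ 0) (h : Nat.Coprime (c.gcd d) N) :
    ∃ t, Nat.Coprime c (d + t * N) := by
  set t := ∏ p ∈ c.primeFactors with ¬ p ∣ d, p
  refine ⟨t, Nat.coprime_of_dvd fun q hq hqc hqdt => ?_⟩
  have hqt : q ∣ t ↔ ¬ q ∣ d := by
    rw [hq.prime.dvd_finsetProd_iff]
    constructor
    · rintro ⟨p, hp, hqp⟩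
      simp only [Finset.mem_filter, Nat.mem_primeFactors] at hp
      exact (Nat.prime_dvd_prime_iff_eq hq hp.1.1).mp hqp ▸ hp.2
    · exact fun hqd => ⟨q, by simp [hq, hqc, hc, hqd], dvd_rfl⟩
  by_cases hqd : q ∣ d
  · have hqN : q ∣ N := (hq.dvd_mul.mp ((Nat.dvd_add_right hqd).mp hqdt)).resolve_left
      (hqt.not.mpr (not_not.mpr hqd))
    exact (Nat.Prime.coprime_iff_not_dvd hq).mp (h.coprime_dvd_left (Nat.dvd_gcd hqc hqd)) hqN
  · exact hqd ((Nat.dvd_add_left (dvd_mul_of_dvd_left (hqt.mpr hqd) N)).mp hqdt)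

theorem ZMod.exists_isCoprime_intCast_eq {N : ℕ} [NeZero N] {c d : ZMod N} (h : IsCoprime c d) :
    ∃ c' d' : ℤ, IsCoprime c' d' ∧ (c' : ZMod N) = c ∧ (d' : ZMod N) = d := by
  -- `c.val + N` rather than `c.val`, so that the lift of `c` is nonzero
  have hgcd : Nat.Coprime ((c.val + N).gcd d.val) N := by
    refine Nat.coprime_of_dvd fun p hp hpcd hpN => ?_
    have hcast (x : ZMod N) (hx : p ∣ x.val) : ZMod.castHom hpN (ZMod p) x = 0 := by
      rw [← ZMod.natCast_zmod_val x, map_natCast, ZMod.natCast_eq_zero_iff]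
      exact hx
    have hp' := Fact.mk hp
    have h0 := h.map (ZMod.castHom hpN (ZMod p))
    rw [hcast d (hpcd.trans (Nat.gcd_dvd_right _ _)), hcast c _, isCoprime_zero_left,
      isUnit_zero_iff] at h0
    · exact zero_ne_one h0
    · exact (Nat.dvd_add_left hpN).mp (hpcd.trans (Nat.gcd_dvd_left _ _))
  obtain ⟨t, ht⟩ := Nat.exists_coprime_add_mul (by simp [NeZero.ne N]) hgcd
  refine ⟨(c.val + N : ℕ), (d.val + t * N : ℕ), Nat.isCoprime_iff_coprime.mpr ht, ?_, ?_⟩ <;> simp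

theorem Matrix.SpecialLinearGroup.SL2_map_intCastRingHom_surjective (N : ℕ) [NeZero N] :
    Function.Surjective (map (Int.castRingHom (ZMod N)) : SL(2, ℤ) →* SL(2, ZMod N)) := by
  intro g
  induction g using fin_two_induction with | h a b c d hdet =>
  obtain ⟨c', d', ⟨u, v, huv⟩, rfl, rfl⟩ := ZMod.exists_isCoprime_intCast_eq (c := c) (d := d)
    ⟨-b, a, by linear_combination hdet⟩
  -- `[[v, -u], [c', d']]` has the right bottom row; a shear `T ^ β` then fixes the top row.
  obtain ⟨β, hβ⟩ := ZMod.intCast_surjective (a * (u : ZMod N) + b * (v : ZMod N))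
  obtain ⟨γ, hγ⟩ : ∃ γ : SL(2, ℤ),
      (γ : Matrix (Fin 2) (Fin 2) ℤ) = !![v + β * c', -u + β * d'; c', d'] :=
    ⟨⟨_, by rw [det_fin_two_of]; linear_combination huv⟩, rfl⟩
  have huv' : (u : ZMod N) * c' + v * d' = 1 := by
    exact_mod_cast congrArg (Int.cast : ℤ → ZMod N) huv
  refine ⟨γ, Subtype.ext ?_⟩
  rw [map_apply_coe, hγ]
  ext i j
  fin_cases i <;> fin_cases j <;> simp
  · linear_combination (c' : ZMod N) * hβ - (v : ZMod N) * hdet + a * huv'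
  · linear_combination (d' : ZMod N) * hβ + (u : ZMod N) * hdet + b * huv'

def unitDiagEvenOffDiag : Subgroup SL(2, ZMod 4) where
  carrier := {g | g 0 0 = 1 ∧ g 1 1 = 1 ∧
    ZMod.castHom (by norm_num : 2 ∣ 4) (ZMod 2) (g 0 1) = 0 ∧
    ZMod.castHom (by norm_num : 2 ∣ 4) (ZMod 2) (g 1 0) = 0}
  one_mem' := by decide
  mul_mem' := by decide
  inv_mem' := by decide

instance : DecidablePred (· ∈ unitDiagEvenOffDiag) := fun _ =>
  inferInstanceAs (Decidable (_ ∧ _))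

theorem index_unitDiagEvenOffDiag : unitDiagEvenOffDiag.index = 12 := by
  have hK : Nat.card unitDiagEvenOffDiag = 4 := by rw [Nat.card_eq_fintype_card]; decide
  have hG : Nat.card SL(2, ZMod 4) = 48 := by rw [Nat.card_eq_fintype_card]; decide
  have hmul := unitDiagEvenOffDiag.index_mul_card
  rw [hK, hG] at hmul
  omega

theorem mem_comap_unitDiagEvenOffDiag (g : SL(2, ℤ)) :
    g ∈ unitDiagEvenOffDiag.comap (SpecialLinearGroup.map (Int.castRingHom (ZMod 4))) ↔
      g 0 0 ≡ 1 [ZMOD 4] ∧ g 1 1 ≡ 1 [ZMOD 4] ∧ g 0 1 ≡ 0 [ZMOD 2] ∧ g 1 0 ≡ 0 [ZMOD 2] := by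
  have h4 (x y : ℤ) : (x : ZMod 4) = y ↔ x ≡ y [ZMOD 4] := ZMod.intCast_eq_intCast_iff x y 4
  have h2 (x : ℤ) : ZMod.castHom (by norm_num : 2 ∣ 4) (ZMod 2) x = 0 ↔ x ≡ 0 [ZMOD 2] := by
    rw [map_intCast, ← Int.cast_zero, ZMod.intCast_eq_intCast_iff, Nat.cast_ofNat]
  simp only [Subgroup.mem_comap, unitDiagEvenOffDiag, Subgroup.mem_mk]
  rw [← h4, ← h4, ← h2, ← h2]
  rfl

theorem stmt_2 (H : Subgroup (Matrix.SpecialLinearGroup (Fin 2) ℤ))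
    (hH : ∀ g : Matrix.SpecialLinearGroup (Fin 2) ℤ,
      g ∈ H ↔
        ((g : Matrix (Fin 2) (Fin 2) ℤ) 0 0 ≡ 1 [ZMOD 4] ∧
         (g : Matrix (Fin 2) (Fin 2) ℤ) 1 1 ≡ 1 [ZMOD 4] ∧
         (g : Matrix (Fin 2) (Fin 2) ℤ) 0 1 ≡ 0 [ZMOD 2] ∧
         (g : Matrix (Fin 2) (Fin 2) ℤ) 1 0 ≡ 0 [ZMOD 2])) :
    H.index = 12 := by
  have hH' : H = unitDiagEvenOffDiag.comap (SpecialLinearGroup.map (Int.castRingHom (ZMod 4))) :=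
    Subgroup.ext fun g => (hH g).trans (mem_comap_unitDiagEvenOffDiag g).symm
  rw [hH', Subgroup.index_comap_of_surjective _
    (SpecialLinearGroup.SL2_map_intCastRingHom_surjective 4), index_unitDiagEvenOffDiag]
end

section
/- For every prime p ≠ 2, the subgroup of SL₂(ℤ/pℤ) generated by the reductions of A = [[1,4],[0,1]] and B = [[0,1],[-1,0]] is all of SL₂(ℤ/pℤ). -/
def A12 : Matrix.SpecialLinearGroup (Fin 2) ℤ := ⟨!![1, 4; 0, 1], by decide⟩
def B12 : Matrix.SpecialLinearGroup (Fin 2) ℤ := ⟨!![0, 1; -1, 0], by decide⟩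

/-!
Over a field, `SL₂` is generated by the elementary transvections
(`Matrix.SL2.transvection_induction`). Conjugation by `B` turns the upper transvection with
entry `c` into the lower one with entry `-c`, and since `4` is a unit modulo an odd prime, the
powers of `A = [[1, 4], [0, 1]]` already give every upper transvection.
-/

open scoped MatrixGroups

namespace Matrix.SpecialLinearGroup

section transvection

variable {ι R : Type*} [DecidableEq ι] [Fintype ι] [CommRing R] {i j : ι}

lemma transvection_zsmul (hij : i ≠ j) (k : ℤ) (b : R) :
    transvection hij (k • b) = transvection hij b ^ k := by
  induction k using Int.induction_on with
  | zero => simp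
  | succ k ih => rw [add_zsmul, one_zsmul, transvection_add, ih, _root_.zpow_add_one]
  | pred k ih => rw [sub_zsmul, one_zsmul, sub_eq_add_neg, transvection_add, ih,
      ← transvection_inv, _root_.zpow_add, _root_.zpow_neg_one]

lemma transvection_mem_zpowers_of_isUnit {N : ℕ} (hij : i ≠ j) {a : ZMod N} (ha : IsUnit a)
    (x : ZMod N) : transvection hij x ∈ Subgroup.zpowers (transvection hij a) := by
  obtain ⟨k, hk⟩ := ZMod.intCast_surjective (x * ((ha.unit⁻¹ : (ZMod N)ˣ) : ZMod N))
  refine Subgroup.mem_zpowers_iff.mpr ⟨k, ?_⟩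
  rw [← transvection_zsmul, zsmul_eq_mul, hk, _root_.mul_assoc, IsUnit.val_inv_mul, mul_one]

end transvection

variable {R : Type*} [CommRing R]

lemma map_A12 : map (Int.castRingHom R) A12 = transvection (zero_ne_one : (0 : Fin 2) ≠ 1) 4 := by
  ext i j
  rw [map_apply_coe]
  fin_cases i <;> fin_cases j <;> simp [A12, transvection_coe]

lemma map_B12_conj_transvection (c : R) :
    map (Int.castRingHom R) B12 * transvection zero_ne_one c * (map (Int.castRingHom R) B12)⁻¹ =
      transvection one_ne_zero (-c) := by
  rw [mul_inv_eq_iff_eq_mul]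
  ext i j
  simp only [coe_mul, map_apply_coe]
  fin_cases i <;> fin_cases j <;> simp [B12, transvection_coe, mul_apply, Fin.sum_univ_two]

lemma eq_top_of_transvection_mem_of_map_B12_mem {F : Type*} [Field F]
    {H : Subgroup SL(2, F)} (hT : ∀ b : F, transvection zero_ne_one b ∈ H)
    (hB : map (Int.castRingHom F) B12 ∈ H) : H = ⊤ := by
  refine (Subgroup.eq_top_iff' H).mpr
    (SL2.transvection_induction _ (fun i j hij c ↦ ?_) fun _ _ ↦ mul_mem)
  fin_cases i <;> fin_cases j
  · exact absurd rfl hij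
  · exact hT c
  · rw [← neg_neg c, ← map_B12_conj_transvection]
    exact mul_mem (mul_mem hB (hT _)) (inv_mem hB)
  · exact absurd rfl hij

end Matrix.SpecialLinearGroup

open Matrix.SpecialLinearGroup

theorem stmt_12 (p : ℕ) (hp : p.Prime) (hp2 : p ≠ 2) :
    Subgroup.closure
        ({Matrix.SpecialLinearGroup.map (Int.castRingHom (ZMod p)) A12,
          Matrix.SpecialLinearGroup.map (Int.castRingHom (ZMod p)) B12} :
          Set (Matrix.SpecialLinearGroup (Fin 2) (ZMod p))) = ⊤ := by
  have : Fact p.Prime := ⟨hp⟩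
  have h4 : IsUnit (4 : ZMod p) := by
    have h2 : (2 : ZMod p) ≠ 0 := Ring.two_ne_zero (by rwa [ZMod.ringChar_zmod_n])
    rw [show (4 : ZMod p) = 2 ^ 2 by norm_num]
    exact (pow_ne_zero 2 h2).isUnit
  refine eq_top_of_transvection_mem_of_map_B12_mem (fun b ↦ ?_)
    (Subgroup.subset_closure (Set.mem_insert_of_mem _ rfl))
  refine Subgroup.zpowers_le.mpr ?_ (transvection_mem_zpowers_of_isUnit _ h4 b)
  exact map_A12 (R := ZMod p) ▸ Subgroup.subset_closure (Set.mem_insert _ _)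
end

section
/- The subgroup of SL₂(ℤ) generated by A = [[1,2],[0,1]] and B = [[1,0],[2,1]] is a free group of rank 2. -/
/-! A nonzero power `Aⁿ = [[1, 2n], [0, 1]]` sends a vector `(x, y)` with `|x| < |y|`
to `(x + 2ny, y)`, where now `|y| < |x + 2ny|`; symmetrically, nonzero powers of `B` send
the region `|y| < |x|` into `|x| < |y|`. As these two regions are disjoint, the ping-pong
lemma for the cyclic groups `⟨A⟩` and `⟨B⟩` shows that `A` and `B` freely generate the
subgroup they span. -/

def A14 : Matrix.SpecialLinearGroup (Fin 2) ℤ := ⟨!![1, 2; 0, 1], by decide⟩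
def B14 : Matrix.SpecialLinearGroup (Fin 2) ℤ := ⟨!![1, 0; 2, 1], by decide⟩

/- Unlike `FreeGroup.injective_lift_of_ping_pong`, this asks for one set per generator instead of
separate ones for `a i` and `(a i)⁻¹`, so that it applies to parabolic elements. -/
open scoped Function Pointwise in
theorem FreeGroup.injective_lift_of_ping_pong_zpow {ι G α : Type*} [Nontrivial ι] [Group G]
    [MulAction G α] (a : ι → G) (X : ι → Set α) (hX : ∀ i, (X i).Nonempty)
    (hXdisj : Pairwise (Disjoint on X))
    (hpp : Pairwise fun i j => ∀ n : ℤ, n ≠ 0 → a i ^ n • X j ⊆ X i) :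
    Function.Injective (FreeGroup.lift a) := by
  have hlift : FreeGroup.lift a =
      (Monoid.CoprodI.lift fun i => FreeGroup.lift fun _ => a i).comp
        freeGroupEquivCoprodI.toMonoidHom := by
    ext i
    simp
  rw [hlift, MonoidHom.coe_comp]
  refine Function.Injective.comp ?_ freeGroupEquivCoprodI.injective
  refine Monoid.CoprodI.lift_injective_of_ping_pong _
    (Or.inr ⟨Classical.arbitrary ι, ?_⟩) X hX hXdisj fun i j hij h hh => ?_
  · exact (Cardinal.natCast_lt_aleph0 (n := 3)).le.trans (Cardinal.aleph0_le_mk _)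
  · obtain ⟨n, rfl⟩ := FreeGroup.freeGroupUnitEquivInt.symm.surjective h
    have hn : n ≠ 0 := by rintro rfl; exact hh (zpow_zero _)
    simpa [FreeGroup.freeGroupUnitEquivInt] using hpp hij n hn

namespace Matrix.SpecialLinearGroup

section CommRing

variable {ι F : Type*} [DecidableEq ι] [Fintype ι] [CommRing F]

lemma transvection_zpow {i j : ι} (hij : i ≠ j) (b : F) (n : ℤ) :
    transvection hij b ^ n = transvection hij (n * b) := by
  induction n using Int.induction_on with
  | zero => simp
  | succ n ih =>
    rw [_root_.zpow_add_one, ih, ← transvection_add]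
    push_cast
    ring_nf
  | pred n ih =>
    rw [_root_.zpow_sub_one, ih, transvection_inv, ← transvection_add]
    push_cast
    ring_nf

lemma transvection_smul_apply {i j : ι} (hij : i ≠ j) (b : F) (v : ι → F) (k : ι) :
    (transvection hij b • v) k = v k + if k = i then b * v j else 0 := by
  simp [Matrix.SpecialLinearGroup.smul_def, transvection_coe, add_mulVec, single_mulVec,
    Function.update_apply]

end CommRing

section LinearOrder

variable {ι F : Type*} [CommRing F] [LinearOrder F]

def dominantSet (i : ι) : Set (ι → F) := {v | ∀ k ≠ i, |v k| < |v i|}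

open scoped Function in
lemma pairwise_disjoint_dominantSet :
    Pairwise (Disjoint on (dominantSet : ι → Set (ι → F))) :=
  fun i j hij => Set.disjoint_left.mpr fun _ hi hj => (hi j hij.symm).asymm (hj i hij)

variable [IsStrictOrderedRing F] [DecidableEq ι]

lemma single_mem_dominantSet (i : ι) : (Pi.single i 1 : ι → F) ∈ dominantSet i := by
  intro k hk
  simp [hk]

variable [Fintype ι]

lemma transvection_smul_mem_dominantSet {i j : ι} (hij : i ≠ j) {b : F} (hb : 2 ≤ |b|)
    {v : ι → F} (hv : v ∈ dominantSet j) : transvection hij b • v ∈ dominantSet i := by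
  have hvi : |v i| < |v j| := hv i hij
  have hgrow : |v j| < |v i + b * v j| := by
    have htri : |b * v j| ≤ |v i + b * v j| + |v i| := by
      simpa using abs_sub (v i + b * v j) (v i)
    rw [abs_mul] at htri
    nlinarith [abs_nonneg (v j)]
  intro k hk
  rw [transvection_smul_apply, transvection_smul_apply, if_neg hk, if_pos rfl, add_zero]
  rcases eq_or_ne k j with rfl | hkj
  · exact hgrow
  · exact (hv k hkj).trans hgrow

lemma two_le_abs_intCast_mul {b : F} (hb : 2 ≤ |b|) {n : ℤ} (hn : n ≠ 0) :
    2 ≤ |(n : F) * b| := by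
  have hn' : (1 : F) ≤ |(n : F)| := by exact_mod_cast Int.one_le_abs hn
  rw [abs_mul]
  nlinarith

theorem injective_lift_transvection_pair {b c : F} (hb : 2 ≤ |b|) (hc : 2 ≤ |c|) :
    Function.Injective (FreeGroup.lift
      ![transvection (zero_ne_one' (Fin 2)) b, transvection (one_ne_zero' (Fin 2)) c]) := by
  refine FreeGroup.injective_lift_of_ping_pong_zpow _ (dominantSet (F := F))
    (fun i => ⟨_, single_mem_dominantSet i⟩) pairwise_disjoint_dominantSet ?_
  intro i j hij n hn
  rw [Set.smul_set_subset_iff]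
  intro v hv
  fin_cases i <;> fin_cases j
  · exact absurd rfl hij
  · simpa [transvection_zpow] using transvection_smul_mem_dominantSet (zero_ne_one' (Fin 2))
      (two_le_abs_intCast_mul hb hn) hv
  · simpa [transvection_zpow] using transvection_smul_mem_dominantSet (one_ne_zero' (Fin 2))
      (two_le_abs_intCast_mul hc hn) hv
  · exact absurd rfl hij

end LinearOrder

end Matrix.SpecialLinearGroup

open Matrix.SpecialLinearGroup

lemma A14_eq_transvection : A14 = transvection (zero_ne_one' (Fin 2)) 2 := by
  ext i j
  fin_cases i <;> fin_cases j <;> rfl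

lemma B14_eq_transvection : B14 = transvection (one_ne_zero' (Fin 2)) 2 := by
  ext i j
  fin_cases i <;> fin_cases j <;> rfl

theorem stmt_14 :
    Nonempty
      ((Subgroup.closure ({A14, B14} : Set (Matrix.SpecialLinearGroup (Fin 2) ℤ))) ≃*
        FreeGroup (Fin 2)) := by
  have hinj : Function.Injective (FreeGroup.lift ![A14, B14]) := by
    rw [A14_eq_transvection, B14_eq_transvection]
    exact injective_lift_transvection_pair (by norm_num) (by norm_num)
  have hrange : (FreeGroup.lift ![A14, B14]).range = Subgroup.closure {A14, B14} := by
    rw [FreeGroup.range_lift_eq_closure, Matrix.range_cons_cons_empty]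
  exact ⟨((MonoidHom.ofInjective hinj).trans (MulEquiv.subgroupCongr hrange)).symm⟩
end

section
/- Any subgroup of SL₂(ℤ) that is not virtually abelian contains two elements which generate a non-abelian free subgroup (in particular it contains a free group of rank 2). -/
/-!
The matrices `A = [[1, 2], [0, 1]]` and `B = [[1, 0], [2, 1]]` generate a free group (Sanov): by
ping-pong on first columns `(p, q)`, `A` pushes the slope `p/q` and `B` the slope `q/p` by `2`. This
free subgroup contains `Γ(4)`, by a Euclidean algorithm on the first column, so it has finite
index. If `H` is not virtually abelian, `H ∩ ⟨A, B⟩` has finite index in `H` and is therefore not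
abelian; as a subgroup of a free group it is free (Nielsen–Schreier), necessarily on at least two
generators, and two distinct free generators generate a free group of rank two.
-/

open Matrix Matrix.SpecialLinearGroup ModularGroup CongruenceSubgroup
open scoped MatrixGroups Pointwise

theorem FreeGroup.mul_comm_of_subsingleton {α : Type*} [Subsingleton α] (u v : FreeGroup α) :
    u * v = v * u := by
  cases isEmpty_or_nonempty α with
  | inl _ => exact Subsingleton.elim _ _
  | inr h =>
    have := uniqueOfSubsingleton h.some
    exact mulEquivIntOfUnique.injective (by rw [_root_.map_mul, _root_.map_mul, mul_comm])

namespace IsFreeGroup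

variable {G : Type*} [Group G] [IsFreeGroup G]

theorem nontrivial_generators_of_mul_ne {u v : G} (h : u * v ≠ v * u) :
    Nontrivial (Generators G) := by
  by_contra hS
  rw [not_nontrivial_iff_subsingleton] at hS
  refine h ((toFreeGroup G).injective ?_)
  simp only [map_mul]
  exact FreeGroup.mul_comm_of_subsingleton _ _

theorem exists_injective_freeGroup_fin_two {u v : G} (h : u * v ≠ v * u) :
    ∃ φ : FreeGroup (Fin 2) →* G, Function.Injective φ := by
  have := nontrivial_generators_of_mul_ne h
  obtain ⟨x, y, hxy⟩ := exists_pair_ne (Generators G)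
  have hxy' : Function.Injective ![x, y] := by
    intro i j
    fin_cases i <;> fin_cases j <;> simp [hxy, hxy.symm]
  exact ⟨(toFreeGroup G).symm.toMonoidHom.comp (FreeGroup.map ![x, y]),
    (toFreeGroup G).symm.injective.comp (FreeGroup.map_injective hxy')⟩

end IsFreeGroup

theorem Subgroup.exists_injective_freeGroup_fin_two {G : Type*} [Group G] {H F : Subgroup G}
    [IsFreeGroup F] {u v : G} (hu : u ∈ H ⊓ F) (hv : v ∈ H ⊓ F) (h : u * v ≠ v * u) :
    ∃ φ : FreeGroup (Fin 2) →* G, Function.Injective φ ∧ ∀ i, φ (FreeGroup.of i) ∈ H := by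
  let u' : H.subgroupOf F := ⟨⟨u, hu.2⟩, hu.1⟩
  let v' : H.subgroupOf F := ⟨⟨v, hv.2⟩, hv.1⟩
  obtain ⟨φ, hφ⟩ := IsFreeGroup.exists_injective_freeGroup_fin_two (u := u') (v := v')
    (fun h' => h (congrArg (fun w : H.subgroupOf F => (w : G)) h'))
  exact ⟨F.subtype.comp ((H.subgroupOf F).subtype.comp φ),
    F.subtype_injective.comp (Subtype.val_injective.comp hφ), fun i => (φ (.of i)).2⟩

theorem Subgroup.closure_pair_mulEquiv_freeGroup {G : Type*} [Group G]
    {φ : FreeGroup (Fin 2) →* G} (hφ : Function.Injective φ) :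
    Nonempty (closure {φ (.of 0), φ (.of 1)} ≃* FreeGroup (Fin 2)) := by
  have hrange : closure {φ (.of 0), φ (.of 1)} = φ.range := by
    rw [MonoidHom.range_eq_map, ← FreeGroup.closure_range_of, MonoidHom.map_closure,
      ← Set.range_comp]
    congr 1
    ext
    simp [Fin.exists_fin_two, eq_comm]
  exact ⟨(MulEquiv.subgroupCongr hrange).trans (MonoidHom.ofInjective hφ).symm⟩

theorem Subgroup.exists_mul_ne_of_not_virtually_comm {G : Type*} [Group G] {H F : Subgroup G}
    [F.FiniteIndex]
    (hH : ¬ ∃ K : Subgroup G, K ≤ H ∧ (∀ a ∈ K, ∀ b ∈ K, a * b = b * a) ∧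
      (K.subgroupOf H).FiniteIndex) :
    ∃ u ∈ H ⊓ F, ∃ v ∈ H ⊓ F, u * v ≠ v * u := by
  by_contra! hcomm
  refine hH ⟨H ⊓ F, inf_le_left, hcomm, ?_⟩
  rw [Subgroup.inf_subgroupOf_left]
  infer_instance

theorem Int.exists_natAbs_add_two_mul_lt {x y : ℤ} (hy : y ≠ 0) (h : y.natAbs < x.natAbs) :
    ∃ k : ℤ, (x + 2 * k * y).natAbs < x.natAbs := by
  rcases lt_or_gt_of_ne hy with hy | hy <;> rcases le_or_gt 0 x with hx | hx
  exacts [⟨1, by omega⟩, ⟨-1, by omega⟩, ⟨-1, by omega⟩, ⟨1, by omega⟩]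

namespace Sanov

def A : SL(2, ℤ) := T ^ (2 : ℤ)

def B : SL(2, ℤ) := S * T ^ (-2 : ℤ) * S⁻¹

def subgroup : Subgroup SL(2, ℤ) := Subgroup.closure {A, B}

lemma coe_A_zpow (k : ℤ) : ↑(A ^ k) = !![1, 2 * k; 0, 1] := by
  rw [A, ← _root_.zpow_mul, coe_T_zpow]

lemma coe_B_zpow (k : ℤ) : ↑(B ^ k) = !![1, 0; 2 * k, 1] := by
  rw [B, conj_zpow, ← _root_.zpow_mul, coe_mul, coe_mul, coe_T_zpow, coe_S, coe_inv, coe_S]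
  simp [adjugate_fin_two]

lemma coe_A : (A : Matrix (Fin 2) (Fin 2) ℤ) = !![1, 2; 0, 1] := by simpa using coe_A_zpow 1

lemma coe_B : (B : Matrix (Fin 2) (Fin 2) ℤ) = !![1, 0; 2, 1] := by simpa using coe_B_zpow 1

lemma first_column_ne_zero (M : SL(2, ℤ)) : M 0 0 ≠ 0 ∨ M 1 0 ≠ 0 := by
  by_contra! h
  have := M.det_coe
  rw [det_fin_two, h.1, h.2] at this
  simp at this

/- Ping-pong sets, in terms of the first column `(p, q)` of a matrix: `XA` is `p/q ∈ [1, ∞]`,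
`YA` is `p/q ∈ (-∞, -1)`, `XB` is `q/p ∈ (1, ∞]`, `YB` is `q/p ∈ (-∞, -1]`, on which `A` and `B`
act by `p/q ↦ p/q + 2` and `q/p ↦ q/p + 2`. -/
def XA : Set SL(2, ℤ) :=
  {M | (0 < M 1 0 ∧ M 1 0 ≤ M 0 0) ∨ (M 1 0 < 0 ∧ M 0 0 ≤ M 1 0) ∨ M 1 0 = 0}

def YA : Set SL(2, ℤ) :=
  {M | (0 < M 1 0 ∧ M 0 0 < -M 1 0) ∨ (M 1 0 < 0 ∧ -M 1 0 < M 0 0)}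

def XB : Set SL(2, ℤ) :=
  {M | (0 < M 0 0 ∧ M 0 0 < M 1 0) ∨ (M 0 0 < 0 ∧ M 1 0 < M 0 0) ∨ M 0 0 = 0}

def YB : Set SL(2, ℤ) :=
  {M | (0 < M 0 0 ∧ M 1 0 ≤ -M 0 0) ∨ (M 0 0 < 0 ∧ -M 0 0 ≤ M 1 0)}

lemma ping_pong_disjoint : Disjoint XA XB ∧ Disjoint YA YB ∧ Disjoint XA YA ∧ Disjoint XA YB ∧
    Disjoint XB YA ∧ Disjoint XB YB := by
  refine ⟨?_, ?_, ?_, ?_, ?_, ?_⟩ <;> refine Set.disjoint_left.2 fun M h₁ h₂ => ?_ <;>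
    have := first_column_ne_zero M <;>
    simp only [XA, XB, YA, YB, Set.mem_ofPred_eq] at h₁ h₂ <;> omega

lemma ping_pong_smul_subset :
    A • YAᶜ ⊆ XA ∧ B • YBᶜ ⊆ XB ∧ A⁻¹ • XAᶜ ⊆ YA ∧ B⁻¹ • XBᶜ ⊆ YB := by
  refine ⟨?_, ?_, ?_, ?_⟩ <;> rintro _ ⟨M, hM, rfl⟩ <;> have := first_column_ne_zero M <;>
    simp [XA, XB, YA, YB, coe_A, coe_B, mul_apply, Fin.sum_univ_two] at hM ⊢ <;> omega

theorem lift_injective : Function.Injective (FreeGroup.lift ![A, B]) := by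
  obtain ⟨hXAB, hYAB, hXAYA, hXAYB, hXBYA, hXBYB⟩ := ping_pong_disjoint
  obtain ⟨hA, hB, hA', hB'⟩ := ping_pong_smul_subset
  refine FreeGroup.injective_lift_of_ping_pong _ ![XA, XB] ![YA, YB] ?_ ?_ ?_ ?_ ?_ ?_
  · intro i
    fin_cases i
    exacts [⟨1, by simp [XA]⟩, ⟨S, by simp [XB, coe_S]⟩]
  · intro i j hij
    fin_cases i <;> fin_cases j
    exacts [absurd rfl hij, hXAB, hXAB.symm, absurd rfl hij]
  · intro i j hij
    fin_cases i <;> fin_cases j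
    exacts [absurd rfl hij, hYAB, hYAB.symm, absurd rfl hij]
  · intro i j
    fin_cases i <;> fin_cases j
    exacts [hXAYA, hXAYB, hXBYA, hXBYB]
  · intro i
    fin_cases i
    exacts [hA, hB]
  · intro i
    fin_cases i
    exacts [hA', hB']

lemma eq_A_zpow_of_apply_one_zero {M : SL(2, ℤ)} (hc : M 1 0 = 0) (ha : 4 ∣ M 0 0 - 1)
    (hb : 2 ∣ M 0 1) : M = A ^ (M 0 1 / 2) := by
  have hdet := M.det_coe
  rw [det_fin_two, hc, mul_zero, sub_zero] at hdet
  obtain ⟨ha', hd'⟩ : M 0 0 = 1 ∧ M 1 1 = 1 := by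
    rcases Int.eq_one_or_neg_one_of_mul_eq_one' hdet with h | h <;> omega
  ext i j
  fin_cases i <;> fin_cases j <;> simp [coe_A_zpow, ha', hd', hc, Int.mul_ediv_cancel' hb]

theorem mem_subgroup_of_dvd {M : SL(2, ℤ)} (ha : 4 ∣ M 0 0 - 1) (hb : 2 ∣ M 0 1)
    (hc : 2 ∣ M 1 0) : M ∈ subgroup := by
  have hA : A ∈ subgroup := Subgroup.subset_closure (by simp)
  have hB : B ∈ subgroup := Subgroup.subset_closure (by simp)
  induction h : (M 0 0).natAbs + (M 1 0).natAbs using Nat.strong_induction_on generalizing M with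
  | _ n ih =>
  by_cases hc0 : M 1 0 = 0
  · rw [eq_A_zpow_of_apply_one_zero hc0 ha hb]
    exact zpow_mem hA _
  -- `M 0 0` is odd and `M 1 0` even, so one of them can be reduced modulo twice the other.
  rcases lt_or_gt_of_ne (show (M 1 0).natAbs ≠ (M 0 0).natAbs by omega) with hlt | hlt
  · obtain ⟨k, hk⟩ := Int.exists_natAbs_add_two_mul_lt hc0 hlt
    have hkc : 2 * 2 ∣ 2 * k * M 1 0 := mul_dvd_mul (dvd_mul_right 2 k) hc
    have hkd : 2 ∣ 2 * k * M 1 1 := dvd_mul_of_dvd_left (dvd_mul_right 2 k) _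
    rw [← Subgroup.mul_mem_cancel_left _ (zpow_mem hA k)]
    refine ih _ ?_ ?_ ?_ ?_ rfl <;> simp [coe_A_zpow, mul_apply, Fin.sum_univ_two] <;> omega
  · obtain ⟨k, hk⟩ := Int.exists_natAbs_add_two_mul_lt (by omega) hlt
    have hka : 2 ∣ 2 * k * M 0 0 := dvd_mul_of_dvd_left (dvd_mul_right 2 k) _
    rw [← Subgroup.mul_mem_cancel_left _ (zpow_mem hB k)]
    refine ih _ ?_ ?_ ?_ ?_ rfl <;> simp [coe_B_zpow, mul_apply, Fin.sum_univ_two] <;> omega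

theorem Gamma_four_le_subgroup : Gamma 4 ≤ subgroup := by
  intro M hM
  obtain ⟨ha, hb, hc, -⟩ := Gamma_mem.1 hM
  have ha' := (ZMod.intCast_eq_intCast_iff_dvd_sub 1 (M 0 0) 4).1 (by simpa using ha.symm)
  rw [ZMod.intCast_zmod_eq_zero_iff_dvd] at hb hc
  apply mem_subgroup_of_dvd <;> push_cast at * <;> omega

instance : subgroup.FiniteIndex := Subgroup.finiteIndex_of_le Gamma_four_le_subgroup

theorem range_lift : (FreeGroup.lift ![A, B]).range = subgroup := by
  rw [FreeGroup.range_lift_eq_closure, range_cons_cons_empty, subgroup]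

instance : IsFreeGroup subgroup :=
  .ofMulEquiv ((MonoidHom.ofInjective lift_injective).trans (MulEquiv.subgroupCongr range_lift))

end Sanov

theorem stmt_19 (H : Subgroup (Matrix.SpecialLinearGroup (Fin 2) ℤ))
    (hH : ¬ ∃ K : Subgroup (Matrix.SpecialLinearGroup (Fin 2) ℤ),
        K ≤ H ∧ (∀ a ∈ K, ∀ b ∈ K, a * b = b * a) ∧ (K.subgroupOf H).FiniteIndex) :
    ∃ a b : Matrix.SpecialLinearGroup (Fin 2) ℤ, a ∈ H ∧ b ∈ H ∧
      Nonempty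
        ((Subgroup.closure ({a, b} : Set (Matrix.SpecialLinearGroup (Fin 2) ℤ))) ≃*
          FreeGroup (Fin 2)) := by
  obtain ⟨u, hu, v, hv, huv⟩ :=
    Subgroup.exists_mul_ne_of_not_virtually_comm (F := Sanov.subgroup) hH
  obtain ⟨φ, hφ, hφH⟩ := Subgroup.exists_injective_freeGroup_fin_two hu hv huv
  exact ⟨φ (.of 0), φ (.of 1), hφH 0, hφH 1, Subgroup.closure_pair_mulEquiv_freeGroup hφ⟩
end
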